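/- (Mrs. Gerber's Lemma for a binary Markov chain) Let U, X, Y be finite random variables such that U − X − Y is a Markov chain, X takes values in {0,1}, and Y is the output of a binary symmetric channel with crossover probability p ∈ [0,1/2] applied to X. Then H(Y|U) ≥ H_b(H_b⁻¹(H(X|U)) ∗ p), where entropies are in bits. -/

import Mathlib

/-!
Parametrising by `t = Hb⁻¹ h ∈ [0, 1/2]`, the map `h ↦ Hb (Hb⁻¹ h ∗ p)` has chord slopes that are
values of `ρ t = (1 - 2p) Hb' (t ∗ p) / Hb' t`, and `ρ` is increasing because
`x (1 - x) Hb' x` is concave and vanishes at `1/2`; so the map is convex on `[0, 1]`.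
Since `H(X|U) = ∑ᵤ P(u) Hb (P(X = 1 | u))` and, through the channel,
`H(Y|U) = ∑ᵤ P(u) Hb (P(X = 1 | u) ∗ p)`, Jensen's inequality gives the claim.
-/

open scoped BigOperators

noncomputable def Hb (x : ℝ) : ℝ := -(x * Real.logb 2 x) - (1 - x) * Real.logb 2 (1 - x)

noncomputable def star (p q : ℝ) : ℝ := p * (1 - q) + (1 - p) * q

structure FinProb (Ω : Type) [Fintype Ω] where
  p : Ω → ℝ
  nonneg : ∀ ω, 0 ≤ p ω
  sum_one : ∑ ω, p ω = 1

noncomputable def pmfOf {Ω α : Type} [Fintype Ω] [DecidableEq α]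
    (μ : FinProb Ω) (X : Ω → α) (a : α) : ℝ :=
  ∑ ω, if X ω = a then μ.p ω else 0

noncomputable def H2 {Ω α : Type} [Fintype Ω] [Fintype α] [DecidableEq α]
    (μ : FinProb Ω) (X : Ω → α) : ℝ :=
  -∑ a, pmfOf μ X a * Real.logb 2 (pmfOf μ X a)

noncomputable def condH2 {Ω α β : Type} [Fintype Ω] [Fintype α] [Fintype β]
    [DecidableEq α] [DecidableEq β] (μ : FinProb Ω) (X : Ω → α) (Y : Ω → β) : ℝ :=
  H2 μ (fun ω => (X ω, Y ω)) - H2 μ Y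

noncomputable def MI2 {Ω α β : Type} [Fintype Ω] [Fintype α] [Fintype β]
    [DecidableEq α] [DecidableEq β] (μ : FinProb Ω) (X : Ω → α) (Y : Ω → β) : ℝ :=
  H2 μ X + H2 μ Y - H2 μ (fun ω => (X ω, Y ω))

def Markov3 {Ω α β γ : Type} [Fintype Ω] [DecidableEq α] [DecidableEq β] [DecidableEq γ]
    (μ : FinProb Ω) (X : Ω → α) (Y : Ω → β) (Z : Ω → γ) : Prop :=
  ∀ a b c, pmfOf μ (fun ω => (X ω, Y ω, Z ω)) (a, b, c) * pmfOf μ Y b =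
    pmfOf μ (fun ω => (X ω, Y ω)) (a, b) * pmfOf μ (fun ω => (Y ω, Z ω)) (b, c)

open Real Set

noncomputable def binEntropyDeriv (x : ℝ) : ℝ := log (1 - x) - log x

lemma binEntropyDeriv_pos {x : ℝ} (h₀ : 0 < x) (h : x < 1 / 2) : 0 < binEntropyDeriv x :=
  sub_pos.2 (log_lt_log h₀ (by linarith))

lemma binEntropyDeriv_nonneg {x : ℝ} (h₀ : 0 < x) (h : x ≤ 1 / 2) : 0 ≤ binEntropyDeriv x :=
  sub_nonneg.2 (log_le_log h₀ (by linarith))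

lemma antitoneOn_binEntropyDeriv : AntitoneOn binEntropyDeriv (Ioo 0 1) := by
  intro x hx y hy hxy
  have h₁ : log (1 - y) ≤ log (1 - x) := log_le_log (by linarith [hy.2]) (by linarith)
  have h₂ : log x ≤ log y := log_le_log hx.1 hxy
  simp only [binEntropyDeriv]
  linarith

lemma hasDerivAt_binEntropyDeriv {x : ℝ} (h₀ : x ≠ 0) (h₁ : x ≠ 1) :
    HasDerivAt binEntropyDeriv (-(x * (1 - x))⁻¹) x := by
  have h₁' : 1 - x ≠ 0 := sub_ne_zero.2 h₁.symm
  refine (((hasDerivAt_log h₁').comp x ((hasDerivAt_id x).const_sub 1)).sub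
    (hasDerivAt_log h₀)).congr_deriv ?_
  field_simp
  ring

lemma Hb_eq_binEntropy_div (x : ℝ) : Hb x = binEntropy x / log 2 := by
  simp only [Hb, logb, binEntropy, log_inv]
  ring

lemma continuous_Hb : Continuous Hb := by
  simp only [funext Hb_eq_binEntropy_div]
  fun_prop

lemma Hb_one_sub (x : ℝ) : Hb (1 - x) = Hb x := by
  simp only [Hb_eq_binEntropy_div, binEntropy_one_sub]

lemma strictMonoOn_Hb : StrictMonoOn Hb (Icc 0 (1 / 2)) := by
  intro x hx y hy hxy
  simp only [Hb_eq_binEntropy_div, one_div] at *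
  exact div_lt_div_of_pos_right (binEntropy_strictMonoOn hx hy hxy) (log_pos one_lt_two)

lemma Hb_mem_Icc {x : ℝ} (hx : x ∈ Icc (0 : ℝ) 1) : Hb x ∈ Icc (0 : ℝ) 1 := by
  rw [Hb_eq_binEntropy_div]
  exact ⟨div_nonneg (binEntropy_nonneg hx.1 hx.2) (log_nonneg one_le_two),
    (div_le_one (log_pos one_lt_two)).2 binEntropy_le_log_two⟩

lemma hasDerivAt_Hb {x : ℝ} (h₀ : x ≠ 0) (h₁ : x ≠ 1) :
    HasDerivAt Hb (binEntropyDeriv x / log 2) x := by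
  rw [funext Hb_eq_binEntropy_div]
  exact (hasDerivAt_binEntropy h₀ h₁).div_const _

lemma star_eq (a p : ℝ) : star a p = p + (1 - 2 * p) * a := by
  simp only [_root_.star]
  ring

lemma star_one_sub (a p : ℝ) : star (1 - a) p = 1 - star a p := by
  simp only [star_eq]
  ring

lemma hasDerivAt_star (a p : ℝ) : HasDerivAt (fun t => star t p) (1 - 2 * p) a := by
  simp only [star_eq]
  simpa using ((hasDerivAt_id a).const_mul (1 - 2 * p)).const_add p

lemma star_mem_Ioc {a p : ℝ} (ha : a ∈ Ioc (0 : ℝ) (1 / 2)) (hp : p ∈ Icc (0 : ℝ) (1 / 2)) :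
    star a p ∈ Ioc (0 : ℝ) (1 / 2) := by
  rw [star_eq]
  obtain ⟨ha₀, ha₁⟩ := ha
  obtain ⟨hp₀, hp₁⟩ := hp
  constructor <;> nlinarith

lemma concaveOn_mul_binEntropyDeriv :
    ConcaveOn ℝ (Ioc 0 (1 / 2)) fun x => x * (1 - x) * binEntropyDeriv x := by
  have hderiv : ∀ x ∈ Ioo (0 : ℝ) 1, HasDerivAt (fun x => x * (1 - x) * binEntropyDeriv x)
      ((1 - 2 * x) * binEntropyDeriv x - 1) x := by
    intro x hx
    have hquad : HasDerivAt (fun x : ℝ => x * (1 - x)) (1 - 2 * x) x := by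
      refine ((hasDerivAt_id x).mul ((hasDerivAt_id x).const_sub 1)).congr_deriv ?_
      simp only [id]
      ring
    have hx' : x * (1 - x) ≠ 0 := mul_ne_zero hx.1.ne' (by linarith [hx.2])
    refine (hquad.mul (hasDerivAt_binEntropyDeriv hx.1.ne' (by linarith [hx.2]))).congr_deriv ?_
    rw [mul_neg, mul_inv_cancel₀ hx']
    ring
  have hIoc : Ioc (0 : ℝ) (1 / 2) ⊆ Ioo 0 1 := fun x hx => ⟨hx.1, by linarith [hx.2]⟩
  refine AntitoneOn.concaveOn_of_deriv (convex_Ioc 0 _)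
    (fun x hx => (hderiv x (hIoc hx)).continuousAt.continuousWithinAt)
    (fun x hx => (hderiv x (hIoc (interior_subset hx))).differentiableAt.differentiableWithinAt) ?_
  rw [interior_Ioc]
  intro x hx y hy hxy
  rw [(hderiv y (hIoc ⟨hy.1, hy.2.le⟩)).deriv, (hderiv x (hIoc ⟨hx.1, hx.2.le⟩)).deriv]
  have := mul_le_mul (by linarith : 1 - 2 * y ≤ 1 - 2 * x)
    (antitoneOn_binEntropyDeriv (hIoc ⟨hx.1, hx.2.le⟩) (hIoc ⟨hy.1, hy.2.le⟩) hxy)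
    (binEntropyDeriv_nonneg hy.1 hy.2.le) (by linarith [hx.2])
  linarith

/-- Concavity against the zero of `x (1 - x) binEntropyDeriv x` at `1 / 2`, since
`star t p = (1 - 2 p) t + 2 p / 2`. -/
lemma mul_binEntropyDeriv_le_star {t p : ℝ} (ht : t ∈ Ioc (0 : ℝ) (1 / 2))
    (hp : p ∈ Icc (0 : ℝ) (1 / 2)) :
    (1 - 2 * p) * (t * (1 - t) * binEntropyDeriv t) ≤
      star t p * (1 - star t p) * binEntropyDeriv (star t p) := by
  have h := concaveOn_mul_binEntropyDeriv.2 ht (right_mem_Ioc.2 (by norm_num : (0 : ℝ) < 1 / 2))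
    (by linarith [hp.2] : 0 ≤ 1 - 2 * p) (by linarith [hp.1] : 0 ≤ 2 * p) (by ring)
  have hhalf : binEntropyDeriv (1 / 2) = 0 := by norm_num [binEntropyDeriv]
  simp only [smul_eq_mul, hhalf, mul_zero, add_zero] at h
  rwa [show star t p = (1 - 2 * p) * t + 2 * p * (1 / 2) by rw [star_eq]; ring]

lemma monotoneOn_binEntropyDeriv_star_div {p : ℝ} (hp : p ∈ Icc (0 : ℝ) (1 / 2)) :
    MonotoneOn (fun t => (1 - 2 * p) * binEntropyDeriv (star t p) / binEntropyDeriv t)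
      (Ioo 0 (1 / 2)) := by
  have hderiv : ∀ t ∈ Ioo (0 : ℝ) (1 / 2),
      HasDerivAt (fun t => (1 - 2 * p) * binEntropyDeriv (star t p) / binEntropyDeriv t)
        ((1 - 2 * p) * (star t p * (1 - star t p) * binEntropyDeriv (star t p) -
            (1 - 2 * p) * (t * (1 - t) * binEntropyDeriv t)) /
          (t * (1 - t) * (star t p * (1 - star t p))) / binEntropyDeriv t ^ 2) t := by
    intro t ht
    obtain ⟨hb₀, hb₁⟩ := star_mem_Ioc ⟨ht.1, ht.2.le⟩ hp
    have ht₁ : 1 - t ≠ 0 := by linarith [ht.2]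
    have hb₁' : 1 - star t p ≠ 0 := by linarith
    have hB := (binEntropyDeriv_pos ht.1 ht.2).ne'
    refine ((((hasDerivAt_binEntropyDeriv hb₀.ne' (by linarith)).comp t
      (hasDerivAt_star t p)).const_mul _).div
      (hasDerivAt_binEntropyDeriv ht.1.ne' (by linarith [ht.2]))
      hB).congr_deriv ?_
    simp only [Function.comp_apply]
    field_simp [ht.1.ne', ht₁, hb₀.ne', hb₁', hB]
    ring
  refine monotoneOn_of_deriv_nonneg (convex_Ioo 0 _)
    (fun t ht => (hderiv t ht).continuousAt.continuousWithinAt)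
    (by
      rw [interior_Ioo]
      exact fun t ht => (hderiv t ht).differentiableAt.differentiableWithinAt)
    fun t ht => ?_
  rw [interior_Ioo] at ht
  rw [(hderiv t ht).deriv]
  obtain ⟨hb₀, hb₁⟩ := star_mem_Ioc ⟨ht.1, ht.2.le⟩ hp
  have key := sub_nonneg.2 (mul_binEntropyDeriv_le_star ⟨ht.1, ht.2.le⟩ hp)
  have hden : 0 < t * (1 - t) * (star t p * (1 - star t p)) :=
    mul_pos (mul_pos ht.1 (by linarith [ht.2])) (mul_pos hb₀ (by linarith))
  exact div_nonneg (div_nonneg (mul_nonneg (by linarith [hp.2]) key) hden.le) (sq_nonneg _)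

/-- By Cauchy's mean value theorem every chord slope of `k ∘ g` is a value of `ρ` at a point
between the preimages of the endpoints, so the slopes increase with the chord. -/
theorem convexOn_comp_of_hasDerivAt_eq_mul {f k g f' k' ρ : ℝ → ℝ} {a b : ℝ} {s : Set ℝ}
    (hs : Convex ℝ s) (hg : ∀ y ∈ s, g y ∈ Icc a b ∧ f (g y) = y)
    (hfc : ContinuousOn f (Icc a b)) (hkc : ContinuousOn k (Icc a b))
    (hf' : ∀ t ∈ Ioo a b, HasDerivAt f (f' t) t) (hk' : ∀ t ∈ Ioo a b, HasDerivAt k (k' t) t)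
    (hf'_pos : ∀ t ∈ Ioo a b, 0 < f' t) (hk'_eq : ∀ t ∈ Ioo a b, k' t = ρ t * f' t)
    (hρ : MonotoneOn ρ (Ioo a b)) : ConvexOn ℝ s (k ∘ g) := by
  have hf : StrictMonoOn f (Icc a b) :=
    strictMonoOn_of_deriv_pos (convex_Icc a b) hfc fun t ht => by
      rw [interior_Icc] at ht
      rw [(hf' t ht).deriv]
      exact hf'_pos t ht
  have hg_lt : ∀ {u v}, u ∈ s → v ∈ s → u < v → g u < g v := fun hu hv huv => by
    by_contra! h
    have := hf.monotoneOn (hg _ hv).1 (hg _ hu).1 h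
    rw [(hg _ hu).2, (hg _ hv).2] at this
    linarith
  have hsub : ∀ {u v}, u ∈ s → v ∈ s → Ioo (g u) (g v) ⊆ Ioo a b := fun hu hv t ht =>
    ⟨(hg _ hu).1.1.trans_lt ht.1, ht.2.trans_le (hg _ hv).1.2⟩
  have hslope : ∀ {u v}, u ∈ s → v ∈ s → u < v →
      ∃ c ∈ Ioo (g u) (g v), (k (g v) - k (g u)) / (v - u) = ρ c := by
    intro u v hu hv huv
    have hIcc : Icc (g u) (g v) ⊆ Icc a b := Icc_subset_Icc (hg _ hu).1.1 (hg _ hv).1.2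
    obtain ⟨c, hc, hcauchy⟩ := exists_ratio_hasDerivAt_eq_ratio_slope f f' (hg_lt hu hv huv)
      (hfc.mono hIcc) (fun t ht => hf' t (hsub hu hv ht)) k k' (hkc.mono hIcc)
      (fun t ht => hk' t (hsub hu hv ht))
    refine ⟨c, hc, ?_⟩
    rw [(hg _ hu).2, (hg _ hv).2, hk'_eq c (hsub hu hv hc)] at hcauchy
    rw [div_eq_iff (sub_ne_zero.2 huv.ne')]
    apply mul_right_cancel₀ (hf'_pos c (hsub hu hv hc)).ne'
    linear_combination hcauchy
  refine convexOn_of_slope_mono_adjacent hs fun {x y z} hx hz hxy hyz => ?_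
  have hy : y ∈ s := hs.ordConnected.out hx hz ⟨hxy.le, hyz.le⟩
  obtain ⟨c₁, hc₁, h₁⟩ := hslope hx hy hxy
  obtain ⟨c₂, hc₂, h₂⟩ := hslope hy hz hyz
  simp only [Function.comp_apply]
  rw [h₁, h₂]
  exact hρ (hsub hx hy hc₁) (hsub hy hz hc₂) (hc₁.2.trans hc₂.1).le

section InverseHb

variable {p : ℝ} {g : ℝ → ℝ}

theorem convexOn_Hb_star_comp (hp : p ∈ Icc (0 : ℝ) (1 / 2))
    (hg : ∀ y ∈ Icc (0 : ℝ) 1, g y ∈ Icc (0 : ℝ) (1 / 2) ∧ Hb (g y) = y) :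
    ConvexOn ℝ (Icc 0 1) fun h => Hb (star (g h) p) := by
  have hne : ∀ {t : ℝ}, t ∈ Ioc (0 : ℝ) (1 / 2) → t ≠ 0 ∧ t ≠ 1 := fun ht =>
    ⟨ht.1.ne', by linarith [ht.2]⟩
  have hstar : ∀ {t : ℝ}, t ∈ Ioo (0 : ℝ) (1 / 2) → star t p ∈ Ioc (0 : ℝ) (1 / 2) := fun ht =>
    star_mem_Ioc ⟨ht.1, ht.2.le⟩ hp
  refine convexOn_comp_of_hasDerivAt_eq_mul (convex_Icc 0 1) hg continuous_Hb.continuousOn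
    (continuous_Hb.comp (by simp only [star_eq]; fun_prop)).continuousOn
    (fun t ht => hasDerivAt_Hb (hne ⟨ht.1, ht.2.le⟩).1 (hne ⟨ht.1, ht.2.le⟩).2)
    (fun t ht => (hasDerivAt_Hb (hne (hstar ht)).1 (hne (hstar ht)).2).comp t (hasDerivAt_star t p))
    (fun t ht => div_pos (binEntropyDeriv_pos ht.1 ht.2) (log_pos one_lt_two))
    (fun t ht => ?_) (monotoneOn_binEntropyDeriv_star_div hp)
  field_simp [(binEntropyDeriv_pos ht.1 ht.2).ne']

/-- `g` folds `a` onto `[0, 1/2]`, and `Hb (star · p)` is invariant under the fold `a ↦ 1 - a`. -/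
lemma Hb_star_comp_Hb (hg : ∀ y ∈ Icc (0 : ℝ) 1, g y ∈ Icc (0 : ℝ) (1 / 2) ∧ Hb (g y) = y)
    {a : ℝ} (ha : a ∈ Icc (0 : ℝ) 1) : Hb (star (g (Hb a)) p) = Hb (star a p) := by
  obtain ⟨hmem, heq⟩ := hg (Hb a) (Hb_mem_Icc ha)
  rcases le_total a (1 / 2) with h | h
  · rw [strictMonoOn_Hb.injOn hmem ⟨ha.1, h⟩ heq]
  · rw [strictMonoOn_Hb.injOn hmem ⟨by linarith [ha.2], by linarith⟩
      (heq.trans (Hb_one_sub a).symm), star_one_sub, Hb_one_sub]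

end InverseHb

section FiniteEntropy

variable {Ω : Type} [Fintype Ω] (μ : FinProb Ω)

lemma pmfOf_nonneg {α : Type} [DecidableEq α] (X : Ω → α) (a : α) : 0 ≤ pmfOf μ X a :=
  Finset.sum_nonneg fun ω _ => by split_ifs <;> simp [μ.nonneg ω]

lemma sum_pmfOf {α : Type} [Fintype α] [DecidableEq α] (X : Ω → α) : ∑ a, pmfOf μ X a = 1 := by
  simp only [pmfOf]
  rw [Finset.sum_comm]
  simpa using μ.sum_one

lemma sum_pmfOf_pair {α β : Type} [Fintype β] [DecidableEq α] [DecidableEq β]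
    (X : Ω → α) (Y : Ω → β) (a : α) :
    ∑ b, pmfOf μ (fun ω => (X ω, Y ω)) (a, b) = pmfOf μ X a := by
  simp only [pmfOf, Prod.mk.injEq]
  rw [Finset.sum_comm]
  refine Finset.sum_congr rfl fun ω _ => ?_
  by_cases h : X ω = a <;> simp [h]

lemma sum_pmfOf_triple {α β γ : Type} [Fintype β] [DecidableEq α] [DecidableEq β]
    [DecidableEq γ] (X : Ω → α) (Y : Ω → β) (Z : Ω → γ) (a : α) (c : γ) :
    ∑ b, pmfOf μ (fun ω => (X ω, Y ω, Z ω)) (a, b, c) = pmfOf μ (fun ω => (X ω, Z ω)) (a, c) := by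
  simp only [pmfOf, Prod.mk.injEq]
  rw [Finset.sum_comm]
  refine Finset.sum_congr rfl fun ω _ => ?_
  by_cases h : X ω = a <;> by_cases h' : Z ω = c <;> simp [h, h']

lemma pmfOf_pair_le {α β : Type} [Fintype β] [DecidableEq α] [DecidableEq β]
    (X : Ω → α) (Y : Ω → β) (a : α) (b : β) :
    pmfOf μ (fun ω => (X ω, Y ω)) (a, b) ≤ pmfOf μ X a := by
  rw [← sum_pmfOf_pair μ X Y a]
  exact Finset.single_le_sum (fun b _ => pmfOf_nonneg μ _ _) (Finset.mem_univ b)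

lemma H2_equiv {α β : Type} [Fintype α] [Fintype β] [DecidableEq α] [DecidableEq β]
    (e : α ≃ β) (X : Ω → α) : H2 μ (fun ω => e (X ω)) = H2 μ X := by
  have hpmf : ∀ a, pmfOf μ (fun ω => e (X ω)) (e a) = pmfOf μ X a := fun a => by
    simp only [pmfOf, e.apply_eq_iff_eq]
  simp only [H2, ← e.sum_comp, hpmf]

/-- If `r₁ + r₀ = 0` both sides vanish, by `logb_neg_eq_logb` (and `x / 0 = 0`). -/
lemma mul_Hb_div_add (r₁ r₀ : ℝ) :
    (r₁ + r₀) * Hb (r₁ / (r₁ + r₀)) =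
      (r₁ + r₀) * logb 2 (r₁ + r₀) - r₁ * logb 2 r₁ - r₀ * logb 2 r₀ := by
  set q := r₁ + r₀
  rcases eq_or_ne q 0 with h | h
  · rw [show r₀ = -r₁ by linarith, logb_neg_eq_logb, h]
    ring
  have hmul : ∀ r, q * (r / q * logb 2 (r / q)) = r * logb 2 r - r * logb 2 q := fun r => by
    rcases eq_or_ne r 0 with rfl | hr
    · simp
    · rw [logb_div hr h]
      field_simp
  have hsub : 1 - r₁ / q = r₀ / q := by
    field_simp
    linarith
  rw [Hb, hsub, mul_sub, mul_neg, hmul, hmul]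
  ring

lemma condH2_bool_eq_sum {U' : Type} [Fintype U'] [DecidableEq U'] (U : Ω → U') (X : Ω → Bool) :
    condH2 μ X U =
      ∑ u, pmfOf μ U u * Hb (pmfOf μ (fun ω => (U ω, X ω)) (u, true) / pmfOf μ U u) := by
  have hq : ∀ u, pmfOf μ U u =
      pmfOf μ (fun ω => (U ω, X ω)) (u, true) + pmfOf μ (fun ω => (U ω, X ω)) (u, false) :=
    fun u => by rw [← sum_pmfOf_pair μ U X u, Fintype.sum_bool]
  have hswap : H2 μ (fun ω => (X ω, U ω)) = H2 μ (fun ω => (U ω, X ω)) :=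
    H2_equiv μ (Equiv.prodComm U' Bool) fun ω => (U ω, X ω)
  rw [condH2, hswap]
  simp only [H2, Fintype.sum_prod_type, Fintype.sum_bool]
  rw [neg_sub_neg, ← Finset.sum_sub_distrib]
  refine Finset.sum_congr rfl fun u _ => ?_
  rw [hq u, mul_Hb_div_add]
  ring

lemma condH2_bsc {U' : Type} [Fintype U'] [DecidableEq U'] (U : Ω → U') (X Y : Ω → Bool) {p : ℝ}
    (hbsc : ∀ (u : U') (x y : Bool),
      pmfOf μ (fun ω => (U ω, X ω, Y ω)) (u, x, y) =
        pmfOf μ (fun ω => (U ω, X ω)) (u, x) * (if y = x then 1 - p else p)) :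
    condH2 μ Y U =
      ∑ u, pmfOf μ U u * Hb (star (pmfOf μ (fun ω => (U ω, X ω)) (u, true) / pmfOf μ U u) p) := by
  rw [condH2_bool_eq_sum]
  refine Finset.sum_congr rfl fun u _ => ?_
  have hY : pmfOf μ (fun ω => (U ω, Y ω)) (u, true) =
      pmfOf μ (fun ω => (U ω, X ω)) (u, true) * (1 - p) +
        pmfOf μ (fun ω => (U ω, X ω)) (u, false) * p := by
    rw [← sum_pmfOf_triple μ U X Y u true, Fintype.sum_bool, hbsc, hbsc]
    simp
  have hq : pmfOf μ U u =
      pmfOf μ (fun ω => (U ω, X ω)) (u, true) + pmfOf μ (fun ω => (U ω, X ω)) (u, false) := by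
    rw [← sum_pmfOf_pair μ U X u, Fintype.sum_bool]
  rcases eq_or_ne (pmfOf μ U u) 0 with h | h
  · simp [h]
  congr 2
  rw [hY, star_eq, hq]
  rw [hq] at h
  field_simp
  ring

end FiniteEntropy

theorem mrs_gerber_markov_general {Ω U' : Type} [Fintype Ω] [Fintype U'] [DecidableEq U']
    (μ : FinProb Ω) (U : Ω → U') (X Y : Ω → Bool) (p : ℝ) (hp : p ∈ Set.Icc (0:ℝ) (1/2))
    (hbsc : ∀ (u : U') (x y : Bool),
      pmfOf μ (fun ω => (U ω, X ω, Y ω)) (u, x, y) =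
        pmfOf μ (fun ω => (U ω, X ω)) (u, x) * (if y = x then 1 - p else p))
    (g : ℝ → ℝ) (hg : ∀ y ∈ Set.Icc (0:ℝ) 1, g y ∈ Set.Icc (0:ℝ) (1/2) ∧ Hb (g y) = y) :
    Hb (star (g (condH2 μ X U)) p) ≤ condH2 μ Y U := by
  set a : U' → ℝ := fun u => pmfOf μ (fun ω => (U ω, X ω)) (u, true) / pmfOf μ U u
  have ha : ∀ u, a u ∈ Icc (0 : ℝ) 1 := fun u =>
    ⟨div_nonneg (pmfOf_nonneg μ _ _) (pmfOf_nonneg μ _ _),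
      div_le_one_of_le₀ (pmfOf_pair_le μ U X u true) (pmfOf_nonneg μ _ _)⟩
  have hjensen := (convexOn_Hb_star_comp hp hg).map_sum_le (t := Finset.univ)
    (fun u _ => pmfOf_nonneg μ U u) (sum_pmfOf μ U) (fun u _ => Hb_mem_Icc (ha u))
  rw [condH2_bool_eq_sum μ U X, condH2_bsc μ U X Y hbsc]
  simpa only [smul_eq_mul, Hb_star_comp_Hb hg (ha _)] using hjensen

theorem mrs_gerber_markov {Ω U' : Type} [Fintype Ω] [Fintype U'] [DecidableEq U']
    (μ : FinProb Ω) (U : Ω → U') (X Y : Ω → Bool) (p : ℝ) (hp : p ∈ Set.Icc (0:ℝ) (1/2))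
    (hmarkov : Markov3 μ U X Y)
    (hbsc : ∀ (u : U') (x y : Bool),
      pmfOf μ (fun ω => (U ω, X ω, Y ω)) (u, x, y) =
        pmfOf μ (fun ω => (U ω, X ω)) (u, x) * (if y = x then 1 - p else p))
    (g : ℝ → ℝ) (hg : ∀ y ∈ Set.Icc (0:ℝ) 1, g y ∈ Set.Icc (0:ℝ) (1/2) ∧ Hb (g y) = y) :
    Hb (star (g (condH2 μ X U)) p) ≤ condH2 μ Y U :=
  mrs_gerber_markov_general μ U X Y p hp hbsc g hg
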